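/- arXiv:2510.04460 — 4 statements merged into one kernel-verified Lean document; each statement's English description precedes it below -/
import Mathlib

section
/- Tweedie's formula: Let π be a probability measure on ℝ^d, let σ > 0, and for y ∈ ℝ^d define ν(y) := ∫ exp(−‖x − y‖₂²/(2σ²)) dπ(x) (which is finite and strictly positive for every y), and let π(·|y) denote the probability measure proportional to exp(−‖x − y‖₂²/(2σ²)) dπ(x). Then y ↦ log ν(y) is differentiable on ℝ^d and for every y ∈ ℝ^d, ∇ log ν(y) = (1/σ²)·(E_{x∼π(·|y)}[x] − y). -/
set_option synthInstance.maxHeartbeats 1000000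
set_option maxHeartbeats 1000000


open MeasureTheory Real

lemma tweedie_aux {σ t : ℝ} (hσ : 0 < σ) (ht : 0 ≤ t) :
    t * Real.exp (-t ^ 2 / (2 * σ ^ 2)) ≤ σ := by
  have hE := Real.add_one_le_exp (t ^ 2 / (2 * σ ^ 2))
  have hσ2 : (0:ℝ) < 2 * σ ^ 2 := by positivity
  have h1 : t ≤ σ * Real.exp (t ^ 2 / (2 * σ ^ 2)) := by
    have h2 : t / σ ≤ t ^ 2 / (2 * σ ^ 2) + 1 := by
      rw [div_add' _ _ _ hσ2.ne', div_le_div_iff₀ hσ hσ2]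
      nlinarith [sq_nonneg (t - σ)]
    calc t = σ * (t / σ) := by field_simp
    _ ≤ σ * (t ^ 2 / (2 * σ ^ 2) + 1) := by
        exact mul_le_mul_of_nonneg_left h2 hσ.le
    _ ≤ σ * Real.exp (t ^ 2 / (2 * σ ^ 2)) := mul_le_mul_of_nonneg_left hE hσ.le
  have h3 : Real.exp (-t ^ 2 / (2 * σ ^ 2)) * Real.exp (t ^ 2 / (2 * σ ^ 2)) = 1 := by
    rw [← Real.exp_add]
    ring_nf
    exact Real.exp_zero
  nlinarith [Real.exp_pos (-t ^ 2 / (2 * σ ^ 2)), Real.exp_pos (t ^ 2 / (2 * σ ^ 2))]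

/-- **Tweedie's formula.** Let `μ` (called `π` in the paper) be a probability measure on
`ℝ^d`, `σ > 0`, and for `y ∈ ℝ^d` let `ν y := ∫ exp (-‖x - y‖² / (2σ²)) dμ x` (finite and
strictly positive for every `y`).  Let `m y` denote the mean of the posterior measure
`μ(·|y)`, the probability measure proportional to `exp (-‖x - y‖² / (2σ²)) dμ x`.  Then
`y ↦ log (ν y)` is differentiable with gradient `∇ log ν (y) = σ⁻² • (m y - y)`. -/
theorem tweedie_formula (d : ℕ) (μ : Measure (EuclideanSpace ℝ (Fin d)))
    [IsProbabilityMeasure μ] (σ : ℝ) (hσ : 0 < σ)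
    (ν : EuclideanSpace ℝ (Fin d) → ℝ)
    (hν : ∀ y, ν y = ∫ x, Real.exp (-‖x - y‖ ^ 2 / (2 * σ ^ 2)) ∂μ)
    (hνpos : ∀ y, 0 < ν y)
    (m : EuclideanSpace ℝ (Fin d) → EuclideanSpace ℝ (Fin d))
    (hm : ∀ y, m y = (ν y)⁻¹ • ∫ x, Real.exp (-‖x - y‖ ^ 2 / (2 * σ ^ 2)) • x ∂μ) :
    ∀ y, HasGradientAt (fun y' => Real.log (ν y')) ((σ ^ 2)⁻¹ • (m y - y)) y := by
  intro y
  have hσ2 : (0:ℝ) < σ ^ 2 := by positivity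
  set e : EuclideanSpace ℝ (Fin d) → EuclideanSpace ℝ (Fin d) → ℝ :=
    fun y' x => Real.exp (-‖x - y'‖ ^ 2 / (2 * σ ^ 2)) with he
  set F' : EuclideanSpace ℝ (Fin d) → EuclideanSpace ℝ (Fin d) →
      (EuclideanSpace ℝ (Fin d) →L[ℝ] ℝ) :=
    fun y' x => (e y' x * (σ ^ 2)⁻¹) • (innerSL ℝ (x - y')) with hF'def
  have hcont : ∀ y', Continuous (e y') := by
    intro y'; rw [he]; fun_prop
  have hepos : ∀ y' x, 0 < e y' x := fun y' x => Real.exp_pos _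
  have he_le_one : ∀ y' x, e y' x ≤ 1 := by
    intro y' x
    rw [he]
    apply Real.exp_le_one_iff.mpr
    apply div_nonpos_of_nonpos_of_nonneg (by simp [sq_nonneg]) (by positivity)
  -- pointwise differentiability
  have hdiff : ∀ (x y' : EuclideanSpace ℝ (Fin d)),
      HasFDerivAt (fun y'' => e y'' x) (F' y' x) y' := by
    intro x y'
    have h1 : HasFDerivAt (fun y'' : EuclideanSpace ℝ (Fin d) => x - y'')
        (-(ContinuousLinearMap.id ℝ _)) y' := (hasFDerivAt_id y').const_sub x
    have h2 : HasFDerivAt (fun y'' => ‖x - y''‖ ^ 2)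
        (2 • (innerSL ℝ (x - y')).comp (-(ContinuousLinearMap.id ℝ _))) y' := h1.norm_sq
    have hq : HasDerivAt (fun t : ℝ => Real.exp (-t / (2 * σ ^ 2)))
        (Real.exp (-‖x - y'‖ ^ 2 / (2 * σ ^ 2)) * (-1 / (2 * σ ^ 2))) (‖x - y'‖ ^ 2) := by
      have := (Real.hasDerivAt_exp (-‖x - y'‖ ^ 2 / (2 * σ ^ 2))).comp (‖x - y'‖ ^ 2)
        (((hasDerivAt_id (‖x - y'‖ ^ 2)).neg).div_const (2 * σ ^ 2))
      simpa [Function.comp_def, neg_div] using this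
    have h3 := hq.comp_hasFDerivAt y' h2
    have : (fun t : ℝ => Real.exp (-t / (2 * σ ^ 2))) ∘ (fun y'' => ‖x - y''‖ ^ 2)
        = fun y'' => e y'' x := by
      funext z; simp [he, Function.comp]
    rw [this] at h3
    refine h3.congr_fderiv ?_
    ext w
    simp only [hF'def, he, ContinuousLinearMap.smul_apply,
      ContinuousLinearMap.coe_smul', Pi.smul_apply, smul_eq_mul,
      ContinuousLinearMap.coe_comp', Function.comp_apply, ContinuousLinearMap.neg_apply,
      ContinuousLinearMap.coe_id', id_eq, innerSL_apply_apply, inner_neg_right]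
    ring
  -- bound on the derivative
  have hbound : ∀ (y' x : EuclideanSpace ℝ (Fin d)), ‖F' y' x‖ ≤ σ⁻¹ := by
    intro y' x
    show ‖(e y' x * (σ ^ 2)⁻¹) • (innerSL ℝ (x - y'))‖ ≤ σ⁻¹
    have h1 : ‖x - y'‖ * e y' x ≤ σ := by
      have := tweedie_aux hσ (norm_nonneg (x - y'))
      simpa [he] using this
    have hepos' : (0:ℝ) < e y' x * (σ ^ 2)⁻¹ := by
      have := hepos y' x; positivity
    apply ContinuousLinearMap.opNorm_le_bound _ (by positivity)
    intro w
    have hval : ((e y' x * (σ ^ 2)⁻¹) • innerSL ℝ (x - y')) w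
        = (e y' x * (σ ^ 2)⁻¹) * (inner ℝ (x - y') w : ℝ) := rfl
    have hip : |(inner ℝ (x - y') w : ℝ)| ≤ ‖x - y'‖ * ‖w‖ := abs_real_inner_le_norm _ _
    rw [hval, Real.norm_eq_abs, abs_mul, abs_of_pos hepos']
    have hfin : (σ ^ 2)⁻¹ * σ = σ⁻¹ := by
      rw [sq]
      field_simp
    calc e y' x * (σ ^ 2)⁻¹ * |(inner ℝ (x - y') w : ℝ)|
        ≤ e y' x * (σ ^ 2)⁻¹ * (‖x - y'‖ * ‖w‖) :=
          mul_le_mul_of_nonneg_left hip hepos'.le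
    _ = (σ ^ 2)⁻¹ * (‖x - y'‖ * e y' x) * ‖w‖ := by ring
    _ ≤ (σ ^ 2)⁻¹ * σ * ‖w‖ := by
        gcongr
    _ = σ⁻¹ * ‖w‖ := by rw [hfin]
  have hmeas : ∀ y', AEStronglyMeasurable (e y') μ := fun y' =>
    (hcont y').aestronglyMeasurable
  have hF'cont : Continuous (F' y) := by
    apply Continuous.smul ((hcont y).mul continuous_const)
    exact (innerSL ℝ).continuous.comp (continuous_id.sub continuous_const)
  have hF'int : Integrable (F' y) μ := by
    apply (integrable_const σ⁻¹).mono' hF'cont.aestronglyMeasurable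
    exact Filter.Eventually.of_forall fun x => hbound y x
  have heint : ∀ y', Integrable (e y') μ := by
    intro y'
    apply (integrable_const (1:ℝ)).mono' (hmeas y')
    exact Filter.Eventually.of_forall fun x => by
      rw [Real.norm_eq_abs, abs_of_pos (hepos y' x)]; exact he_le_one y' x
  -- differentiation under the integral sign
  have hνf : HasFDerivAt (fun y' => ∫ x, e y' x ∂μ) (∫ x, F' y x ∂μ) y := by
    apply hasFDerivAt_integral_of_dominated_of_fderiv_le (bound := fun _ => σ⁻¹)
      (Metric.ball_mem_nhds y one_pos)
      (Filter.Eventually.of_forall fun y' => hmeas y') (heint y)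
      hF'cont.aestronglyMeasurable
      (Filter.Eventually.of_forall fun x y' _ => hbound y' x)
      (integrable_const _)
      (Filter.Eventually.of_forall fun x y' _ => hdiff x y')
  have hνval : ∀ y', ν y' = ∫ x, e y' x ∂μ := hν
  have hνeq : ν = fun y' => ∫ x, e y' x ∂μ := funext hνval
  rw [hνeq]
  have hne : (∫ x, e y x ∂μ) ≠ 0 := by rw [← hνval y]; exact (hνpos y).ne'
  have hlog : HasFDerivAt (fun y' => Real.log (∫ x, e y' x ∂μ))
      ((∫ x, e y x ∂μ)⁻¹ • ∫ x, F' y x ∂μ) y := by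
    have h := (Real.hasDerivAt_log hne).comp_hasFDerivAt y hνf
    simpa [Function.comp_def] using h
  rw [hasGradientAt_iff_hasFDerivAt]
  have hI2 : Integrable (fun x => e y x • x) μ := by
    apply (integrable_const (σ + ‖y‖)).mono'
    · exact ((hcont y).smul continuous_id).aestronglyMeasurable
    · refine Filter.Eventually.of_forall fun x => ?_
      rw [norm_smul, Real.norm_eq_abs, abs_of_pos (hepos y x)]
      have hx : ‖x‖ ≤ ‖x - y‖ + ‖y‖ := by
        calc ‖x‖ = ‖(x - y) + y‖ := by rw [sub_add_cancel]
        _ ≤ ‖x - y‖ + ‖y‖ := norm_add_le _ _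
      calc e y x * ‖x‖ ≤ e y x * (‖x - y‖ + ‖y‖) :=
            mul_le_mul_of_nonneg_left hx (hepos y x).le
      _ = ‖x - y‖ * e y x + e y x * ‖y‖ := by ring
      _ ≤ σ + 1 * ‖y‖ := by
          gcongr
          · simpa [he] using tweedie_aux hσ (norm_nonneg (x - y))
          · exact he_le_one y x
      _ = σ + ‖y‖ := by ring
  -- the key identity between the Fréchet derivative and the claimed gradient
  have key : (InnerProductSpace.toDual ℝ (EuclideanSpace ℝ (Fin d)))
      ((σ ^ 2)⁻¹ • (m y - y)) = (∫ x, e y x ∂μ)⁻¹ • ∫ x, F' y x ∂μ := by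
    ext w
    have happ : (∫ x, F' y x ∂μ) w = ∫ x, (F' y x) w ∂μ :=
      ContinuousLinearMap.integral_apply hF'int w
    have hFw : ∀ x, (F' y x) w =
        (σ ^ 2)⁻¹ * ((inner ℝ w (e y x • x) : ℝ) - e y x * (inner ℝ w y : ℝ)) := by
      intro x
      simp only [hF'def, ContinuousLinearMap.smul_apply, innerSL_apply_apply, smul_eq_mul]
      rw [inner_sub_left, real_inner_smul_right, real_inner_comm x w, real_inner_comm y w]
      ring
    have hint1 : Integrable (fun x => (inner ℝ w (e y x • x) : ℝ)) μ := hI2.const_inner w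
    have hint2 : Integrable (fun x => e y x * (inner ℝ w y : ℝ)) μ :=
      (heint y).mul_const _
    have hsplit : ∫ x, (F' y x) w ∂μ =
        (σ ^ 2)⁻¹ * ((∫ x, (inner ℝ w (e y x • x) : ℝ) ∂μ) -
          ∫ x, e y x * (inner ℝ w y : ℝ) ∂μ) := by
      rw [show (fun x => (F' y x) w) = fun x =>
        (σ ^ 2)⁻¹ * ((inner ℝ w (e y x • x) : ℝ) - e y x * (inner ℝ w y : ℝ)) from funext hFw]
      rw [integral_const_mul, integral_sub hint1 hint2]
    have hA : ∫ x, (inner ℝ w (e y x • x) : ℝ) ∂μ =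
        (inner ℝ w (∫ x, e y x • x ∂μ) : ℝ) := integral_inner hI2 w
    have hB : ∫ x, e y x * (inner ℝ w y : ℝ) ∂μ =
        (∫ x, e y x ∂μ) * (inner ℝ w y : ℝ) := integral_mul_const _ _
    have hAA : (∫ x, Real.exp (-‖x - y‖ ^ 2 / (2 * σ ^ 2)) • x ∂μ)
        = ∫ x, e y x • x ∂μ := rfl
    rw [InnerProductSpace.toDual_apply_apply, ContinuousLinearMap.smul_apply, happ, hsplit, hA, hB]
    rw [hm y, hAA, ← hνval y]
    rw [real_inner_smul_left, inner_sub_left, real_inner_smul_left,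
      real_inner_comm (∫ x, e y x • x ∂μ) w, real_inner_comm y w, smul_eq_mul]
    have hνne : ν y ≠ 0 := (hνpos y).ne'
    have harith : ∀ a b : ℝ, (σ ^ 2)⁻¹ * ((ν y)⁻¹ * a - b)
        = (ν y)⁻¹ * ((σ ^ 2)⁻¹ * (a - ν y * b)) := by
      intro a b
      linear_combination ((σ ^ 2)⁻¹ * b) * inv_mul_cancel₀ hνne
    exact harith _ _
  rw [key]
  exact hlog
end

section
/- The Polchinski semigroup is a semigroup whose adjoint advances the renormalized measures: for all 0 ≤ ρ ≤ σ ≤ τ ≤ 1 and every bounded measurable f: ℝ^d → ℝ, (i) P_{ρ,σ}(P_{σ,τ} f) = P_{ρ,τ} f pointwise on ℝ^d; (ii) E_{ν_τ}[f] = E_{ν_σ}[P_{σ,τ} f] for 0 < σ ≤ τ ≤ 1; and (iii) P_{0,τ} f(0) = E_{ν_τ}[f] for τ ∈ (0,1]. -/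
open MeasureTheory Real
open scoped RealInnerProductSpace

/-- The density of the centered Gaussian `N(0, s I_d)` on `ℝ^d`. -/
noncomputable def gaussDensity (d : ℕ) (s : ℝ) (z : EuclideanSpace ℝ (Fin d)) : ℝ :=
  (2 * Real.pi * s) ^ (-(d : ℝ) / 2) * Real.exp (-‖z‖ ^ 2 / (2 * s))

/-- The Polchinski semigroup `P_{σ,τ}` associated with a family of renormalized
potentials `V`, acting on a test function `f` (with the convention `P_{τ,τ} f = f`). -/
noncomputable def polchinskiP (d : ℕ) (V : ℝ → EuclideanSpace ℝ (Fin d) → ℝ) (σ τ : ℝ)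
    (f : EuclideanSpace ℝ (Fin d) → ℝ) (x : EuclideanSpace ℝ (Fin d)) : ℝ :=
  if σ = τ then f x
  else Real.exp (V σ x) *
    ∫ z, gaussDensity d (τ - σ) z * (Real.exp (-(V τ (x + z))) * f (x + z))

/-- Expectation of `f` under the probability measure with (unnormalized) density `w`
with respect to Lebesgue measure. -/
noncomputable def expD (d : ℕ) (w f : EuclideanSpace ℝ (Fin d) → ℝ) : ℝ :=
  (∫ x, w x * f x) / (∫ x, w x)

/-- The (unnormalized) density of the renormalized measure `ν_τ ∝ exp (-V_τ(x) - ‖x‖²/(2τ))`. -/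
noncomputable def nuDensity (d : ℕ) (V : ℝ → EuclideanSpace ℝ (Fin d) → ℝ) (τ : ℝ)
    (x : EuclideanSpace ℝ (Fin d)) : ℝ :=
  Real.exp (-(V τ x) - ‖x‖ ^ 2 / (2 * τ))

section AuxPolchinski
variable {d : ℕ}

lemma gauss_pos {s : ℝ} (hs : 0 < s) (z : EuclideanSpace ℝ (Fin d)) : 0 < gaussDensity d s z := by
  unfold gaussDensity
  have : (0:ℝ) < 2 * Real.pi * s := by positivity
  positivity

lemma gauss_continuous {s : ℝ} : Continuous (gaussDensity d s) := by
  unfold gaussDensity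
  fun_prop

lemma gauss_measurable {s : ℝ} : Measurable (gaussDensity d s) := gauss_continuous.measurable

lemma gauss_integrable {s : ℝ} (hs : 0 < s) : Integrable (gaussDensity d s) := by
  have h := (GaussianFourier.integrable_cexp_neg_mul_sq_norm_add (V := EuclideanSpace ℝ (Fin d))
    (b := (1/(2*s) : ℂ)) (by simp; positivity) 0 0).norm
  have he : (fun v : EuclideanSpace ℝ (Fin d) =>
      ‖Complex.exp (-(1/(2*s):ℂ) * (‖v‖:ℂ)^2 + 0 * ((⟪(0 : EuclideanSpace ℝ (Fin d)), v⟫ : ℝ) : ℂ))‖)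
      = fun v : EuclideanSpace ℝ (Fin d) => Real.exp (-‖v‖^2/(2*s)) := by
    funext v
    rw [Complex.norm_exp]
    congr 1
    simp [← Complex.ofReal_pow, neg_div]
    ring
  rw [he] at h
  exact h.const_mul ((2 * Real.pi * s) ^ (-(d : ℝ) / 2))

lemma gauss_integral {s : ℝ} (hs : 0 < s) : ∫ z, gaussDensity d s z = 1 := by
  unfold gaussDensity
  rw [MeasureTheory.integral_const_mul]
  have h2s : (0:ℝ) < 1/(2*s) := by positivity
  have h := GaussianFourier.integral_rexp_neg_mul_sq_norm (V := EuclideanSpace ℝ (Fin d)) h2s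
  simp_rw [show ∀ v : EuclideanSpace ℝ (Fin d), -‖v‖^2/(2*s) = -(1/(2*s)) * ‖v‖^2 by
    intro v; ring]
  rw [h, finrank_euclideanSpace_fin, div_div_eq_mul_div, div_one,
    show Real.pi * (2*s) = 2*Real.pi*s by ring,
    ← Real.rpow_add (by positivity),
    show (-(d:ℝ)/2 + (d:ℝ)/2) = 0 by ring, Real.rpow_zero]


lemma gauss_mul {s t : ℝ} (hs : 0 < s) (ht : 0 < t) (z w : EuclideanSpace ℝ (Fin d)) :
    gaussDensity d s z * gaussDensity d t (w - z) =
    gaussDensity d (s + t) w * gaussDensity d (s*t/(s+t)) (z - (s/(s+t)) • w) := by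
  have hst : (0:ℝ) < s + t := by linarith
  unfold gaussDensity
  have h1 : ((2 * Real.pi * s) ^ (-(d:ℝ)/2)) * ((2 * Real.pi * t) ^ (-(d:ℝ)/2))
      = ((2 * Real.pi * (s+t)) ^ (-(d:ℝ)/2)) * ((2 * Real.pi * (s*t/(s+t))) ^ (-(d:ℝ)/2)) := by
    rw [← Real.mul_rpow (by positivity) (by positivity),
      ← Real.mul_rpow (by positivity) (by positivity)]
    congr 1
    field_simp
  have h2 : -‖z‖^2/(2*s) + -‖w - z‖^2/(2*t)
      = -‖w‖^2/(2*(s+t)) + -‖z - (s/(s+t)) • w‖^2/(2*(s*t/(s+t))) := by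
    have e1 : ‖w - z‖^2 = ‖w‖^2 - 2 * ⟪z, w⟫ + ‖z‖^2 := by
      rw [norm_sub_sq_real, real_inner_comm]
    have e2 : ‖z - (s/(s+t)) • w‖^2
        = ‖z‖^2 - 2 * ((s/(s+t)) * ⟪z, w⟫) + (s/(s+t))^2 * ‖w‖^2 := by
      rw [norm_sub_sq_real, real_inner_smul_right, norm_smul]
      rw [mul_pow, Real.norm_eq_abs, sq_abs]
    rw [e1, e2]
    field_simp
    ring
  rw [mul_mul_mul_comm, ← Real.exp_add, h1, h2, Real.exp_add, mul_mul_mul_comm]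

lemma gauss_conv {s t : ℝ} (hs : 0 < s) (ht : 0 < t) (w : EuclideanSpace ℝ (Fin d)) :
    ∫ z, gaussDensity d s z * gaussDensity d t (w - z) = gaussDensity d (s + t) w := by
  have hst : (0:ℝ) < s + t := by linarith
  have hr : (0:ℝ) < s*t/(s+t) := by positivity
  calc ∫ z, gaussDensity d s z * gaussDensity d t (w - z)
      = ∫ z, gaussDensity d (s+t) w * gaussDensity d (s*t/(s+t)) (z - (s/(s+t)) • w) := by
        congr 1; funext z; exact gauss_mul hs ht z w
    _ = gaussDensity d (s+t) w * ∫ z, gaussDensity d (s*t/(s+t)) (z - (s/(s+t)) • w) := by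
        rw [MeasureTheory.integral_const_mul]
    _ = gaussDensity d (s+t) w := by
        rw [show (fun z : EuclideanSpace ℝ (Fin d) => gaussDensity d (s*t/(s+t)) (z - (s/(s+t)) • w))
          = fun z => gaussDensity d (s*t/(s+t)) (z + (-((s/(s+t)) • w))) by
            funext z; rw [sub_eq_add_neg]]
        rw [MeasureTheory.integral_add_right_eq_self (μ := volume)
          (fun z => gaussDensity d (s*t/(s+t)) z) (-((s/(s+t)) • w)), gauss_integral hr, mul_one]

lemma gauss_kernel_integrable {s t : ℝ} (hs : 0 < s) (ht : 0 < t) (w : EuclideanSpace ℝ (Fin d)) :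
    Integrable (fun z => gaussDensity d s z * gaussDensity d t (w - z)) := by
  have hst : (0:ℝ) < s + t := by linarith
  have : (fun z : EuclideanSpace ℝ (Fin d) => gaussDensity d s z * gaussDensity d t (w - z))
      = fun z => gaussDensity d (s+t) w * gaussDensity d (s*t/(s+t)) (z - (s/(s+t)) • w) := by
    funext z; exact gauss_mul hs ht z w
  rw [this]
  exact ((gauss_integrable (by positivity)).comp_sub_right _).const_mul _

lemma ck {s t : ℝ} (hs : 0 < s) (ht : 0 < t) (h : EuclideanSpace ℝ (Fin d) → ℝ)
    (hh : Measurable h)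
    (hint : Integrable (fun y => gaussDensity d (s+t) y * |h y|)) :
    ∫ z, gaussDensity d s z * ∫ w, gaussDensity d t w * h (z + w)
      = ∫ y, gaussDensity d (s + t) y * h y := by
  have hst : (0:ℝ) < s + t := by linarith
  have hm : Measurable (Function.uncurry fun z w : EuclideanSpace ℝ (Fin d) =>
      gaussDensity d s z * (gaussDensity d t (w - z) * h w)) := by
    apply ((gauss_measurable.comp measurable_fst).mul
      ((gauss_measurable.comp (measurable_snd.sub measurable_fst)).mul (hh.comp measurable_snd)))
  have hFi : Integrable (Function.uncurry fun z w : EuclideanSpace ℝ (Fin d) =>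
      gaussDensity d s z * (gaussDensity d t (w - z) * h w)) (volume.prod volume) := by
    refine ⟨hm.aestronglyMeasurable, ?_⟩
    have hm2 : Measurable (fun q : EuclideanSpace ℝ (Fin d) × EuclideanSpace ℝ (Fin d) =>
        ENNReal.ofReal ‖gaussDensity d s q.1 * (gaussDensity d t (q.2 - q.1) * h q.2)‖) :=
      ENNReal.measurable_ofReal.comp hm.norm
    rw [MeasureTheory.hasFiniteIntegral_iff_norm]
    simp only [Function.uncurry]
    rw [MeasureTheory.lintegral_prod_symm _ hm2.aemeasurable]
    have key : ∀ w : EuclideanSpace ℝ (Fin d),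
        ∫⁻ z, ENNReal.ofReal ‖gaussDensity d s z * (gaussDensity d t (w - z) * h w)‖
        = ENNReal.ofReal (gaussDensity d (s+t) w * |h w|) := by
      intro w
      have e : ∀ z, ENNReal.ofReal ‖gaussDensity d s z * (gaussDensity d t (w - z) * h w)‖
          = ENNReal.ofReal (gaussDensity d s z * gaussDensity d t (w - z)) * ENNReal.ofReal |h w| := by
        intro z
        rw [← ENNReal.ofReal_mul (mul_nonneg (gauss_pos hs z).le (gauss_pos ht _).le)]
        congr 1
        rw [Real.norm_eq_abs, abs_mul, abs_mul,
          abs_of_pos (gauss_pos hs z), abs_of_pos (gauss_pos ht _)]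
        ring
      simp_rw [e]
      have hmz : Measurable fun z : EuclideanSpace ℝ (Fin d) =>
          ENNReal.ofReal (gaussDensity d s z * gaussDensity d t (w - z)) := by
        apply Measurable.ennreal_ofReal
        exact gauss_measurable.mul (gauss_measurable.comp (measurable_const.sub measurable_id))
      rw [MeasureTheory.lintegral_mul_const _ hmz,
        ← MeasureTheory.ofReal_integral_eq_lintegral_ofReal (gauss_kernel_integrable hs ht w)
          (Filter.Eventually.of_forall fun z =>
            mul_nonneg (gauss_pos hs z).le (gauss_pos ht _).le),
        gauss_conv hs ht w, ← ENNReal.ofReal_mul (le_of_lt (gauss_pos hst w))]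
    simp_rw [key]
    have := hint.hasFiniteIntegral
    rw [MeasureTheory.hasFiniteIntegral_iff_norm] at this
    refine lt_of_eq_of_lt ?_ this
    congr 1
    funext w
    rw [Real.norm_eq_abs, abs_mul, abs_of_pos (gauss_pos hst w), abs_abs]
  calc ∫ z, gaussDensity d s z * ∫ w, gaussDensity d t w * h (z + w)
      = ∫ z, gaussDensity d s z * ∫ w, gaussDensity d t (w - z) * h w := by
        congr 1; funext z
        congr 1
        rw [← MeasureTheory.integral_add_left_eq_self (μ := volume)
          (fun w => gaussDensity d t (w - z) * h w) z]
        congr 1; funext w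
        simp [add_sub_cancel_left]
    _ = ∫ z, ∫ w, gaussDensity d s z * (gaussDensity d t (w - z) * h w) := by
        congr 1; funext z; rw [MeasureTheory.integral_const_mul]
    _ = ∫ w, ∫ z, gaussDensity d s z * (gaussDensity d t (w - z) * h w) :=
        MeasureTheory.integral_integral_swap hFi
    _ = ∫ w, (∫ z, gaussDensity d s z * gaussDensity d t (w - z)) * h w := by
        congr 1; funext w
        rw [← MeasureTheory.integral_mul_const]
        congr 1; funext z; ring
    _ = ∫ y, gaussDensity d (s + t) y * h y := by
        congr 1; funext w; rw [gauss_conv hs ht w]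

end AuxPolchinski

/-- **The Polchinski semigroup is a semigroup whose adjoint advances the renormalized
measures.**  Here `p` is a smooth strictly positive probability density on `ℝ^d`,
`V 1 x = -log p x - ‖x‖²/2`, `V τ` is the renormalized potential from Gaussian
convolution, `ν_τ` the renormalized measure and `P_{σ,τ}` the Polchinski semigroup.
For every bounded measurable `f`:
(i)  `P_{ρ,σ} (P_{σ,τ} f) = P_{ρ,τ} f` pointwise for `0 ≤ ρ ≤ σ ≤ τ ≤ 1`;
(ii) `E_{ν_τ}[f] = E_{ν_σ}[P_{σ,τ} f]` for `0 < σ ≤ τ ≤ 1`;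
(iii) `P_{0,τ} f 0 = E_{ν_τ}[f]` for `τ ∈ (0,1]`. -/
theorem polchinski_semigroup (d : ℕ) (p : EuclideanSpace ℝ (Fin d) → ℝ)
    (hp_pos : ∀ x, 0 < p x) (hp_smooth : ContDiff ℝ (⊤ : ℕ∞) p) (hp_prob : ∫ x, p x = 1)
    (V : ℝ → EuclideanSpace ℝ (Fin d) → ℝ)
    (hV1 : ∀ x, V 1 x = -Real.log (p x) - ‖x‖ ^ 2 / 2)
    (hVdef : ∀ τ, 0 ≤ τ → τ < 1 → ∀ x,
      V τ x = -Real.log (∫ z, gaussDensity d (1 - τ) z * Real.exp (-(V 1 (x + z)))))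
    (hVfin : ∀ σ τ, 0 ≤ σ → σ < τ → τ ≤ 1 → ∀ x,
      Integrable (fun z => gaussDensity d (τ - σ) z * Real.exp (-(V τ (x + z)))) ∧
      0 < ∫ z, gaussDensity d (τ - σ) z * Real.exp (-(V τ (x + z))))
    (f : EuclideanSpace ℝ (Fin d) → ℝ) (hf_meas : Measurable f)
    (C : ℝ) (hf_bdd : ∀ x, |f x| ≤ C) :
    (∀ ρ σ τ, 0 ≤ ρ → ρ ≤ σ → σ ≤ τ → τ ≤ 1 → ∀ x,
        polchinskiP d V ρ σ (polchinskiP d V σ τ f) x = polchinskiP d V ρ τ f x) ∧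
    (∀ σ τ, 0 < σ → σ ≤ τ → τ ≤ 1 →
        expD d (nuDensity d V τ) f = expD d (nuDensity d V σ) (polchinskiP d V σ τ f)) ∧
    (∀ τ, 0 < τ → τ ≤ 1 → polchinskiP d V 0 τ f 0 = expD d (nuDensity d V τ) f) := by
  have hC : 0 ≤ C := le_trans (abs_nonneg _) (hf_bdd 0)
  have hV1meas : Measurable (V 1) := by
    have : V 1 = fun x => -Real.log (p x) - ‖x‖ ^ 2 / 2 := funext hV1
    rw [this]
    exact ((Real.measurable_log.comp hp_smooth.continuous.measurable).neg).sub
      ((measurable_norm.pow_const 2).div_const 2)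
  have hVmeas : ∀ t : ℝ, 0 ≤ t → t ≤ 1 → Measurable (V t) := by
    intro t ht0 ht1
    rcases eq_or_lt_of_le ht1 with h1 | h1
    · subst h1; exact hV1meas
    · have : V t = fun x => -Real.log (∫ z, gaussDensity d (1 - t) z *
          Real.exp (-(V 1 (x + z)))) := funext (hVdef t ht0 h1)
      rw [this]
      have hsm : StronglyMeasurable fun x : EuclideanSpace ℝ (Fin d) =>
          ∫ z, gaussDensity d (1 - t) z * Real.exp (-(V 1 (x + z))) := by
        apply MeasureTheory.StronglyMeasurable.integral_prod_right'
          (f := fun q : EuclideanSpace ℝ (Fin d) × EuclideanSpace ℝ (Fin d) =>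
            gaussDensity d (1 - t) q.2 * Real.exp (-(V 1 (q.1 + q.2))))
        exact ((gauss_measurable.comp measurable_snd).mul
          (Real.measurable_exp.comp
            ((hV1meas.comp (measurable_fst.add measurable_snd)).neg))).stronglyMeasurable
      exact (Real.measurable_log.comp hsm.measurable).neg
  -- measurability helpers
  have hme : ∀ t : ℝ, 0 ≤ t → t ≤ 1 → ∀ x : EuclideanSpace ℝ (Fin d),
      Measurable fun y => Real.exp (-(V t (x + y))) := fun t ht0 ht1 x =>
    Real.measurable_exp.comp (((hVmeas t ht0 ht1).comp (measurable_const.add measurable_id)).neg)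
  have hmef : ∀ t : ℝ, 0 ≤ t → t ≤ 1 → ∀ x : EuclideanSpace ℝ (Fin d),
      Measurable fun y => Real.exp (-(V t (x + y))) * f (x + y) := fun t ht0 ht1 x =>
    (hme t ht0 ht1 x).mul (hf_meas.comp (measurable_const.add measurable_id))
  -- integrability helpers
  have hIe : ∀ (t r : ℝ), 0 < r → r ≤ t → t ≤ 1 → ∀ x,
      Integrable (fun y => gaussDensity d r y * |Real.exp (-(V t (x + y)))|) := by
    intro t r hr hrt ht1 x
    have hbase := (hVfin (t - r) t (by linarith) (by linarith) ht1 x).1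
    rw [show t - (t - r) = r by ring] at hbase
    exact hbase.congr (Filter.Eventually.of_forall fun y => by simp [Real.abs_exp])
  have hIf : ∀ (t r : ℝ), 0 < r → r ≤ t → t ≤ 1 → ∀ x,
      Integrable (fun y => gaussDensity d r y *
        |Real.exp (-(V t (x + y))) * f (x + y)|) := by
    intro t r hr hrt ht1 x
    have hbase := (hVfin (t - r) t (by linarith) (by linarith) ht1 x).1
    rw [show t - (t - r) = r by ring] at hbase
    apply Integrable.mono (hbase.const_mul C)
    · exact (gauss_measurable.mul (hmef t (by linarith) ht1 x).abs).aestronglyMeasurable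
    · refine Filter.Eventually.of_forall fun y => ?_
      have h1 : |Real.exp (-(V t (x + y))) * f (x + y)| ≤ Real.exp (-(V t (x + y))) * C := by
        rw [abs_mul, Real.abs_exp]
        exact mul_le_mul_of_nonneg_left (hf_bdd _) (Real.exp_pos _).le
      have hg := (gauss_pos hr y).le
      have he := (Real.exp_pos (-(V t (x + y)))).le
      rw [Real.norm_eq_abs, Real.norm_eq_abs, abs_of_nonneg (by positivity),
        abs_of_nonneg (mul_nonneg hC (mul_nonneg hg he))]
      calc gaussDensity d r y * |Real.exp (-(V t (x + y))) * f (x + y)|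
          ≤ gaussDensity d r y * (Real.exp (-(V t (x + y))) * C) :=
            mul_le_mul_of_nonneg_left h1 hg
        _ = C * (gaussDensity d r y * Real.exp (-(V t (x + y)))) := by ring
  have cancel : ∀ a J : ℝ, Real.exp (-a) * (Real.exp a * J) = J := fun a J => by
    rw [← mul_assoc, ← Real.exp_add, neg_add_cancel, Real.exp_zero, one_mul]
  have renorm : ∀ σ τ : ℝ, 0 ≤ σ → σ < τ → τ ≤ 1 → ∀ x,
      Real.exp (-(V σ x)) = ∫ z, gaussDensity d (τ - σ) z * Real.exp (-(V τ (x + z))) := by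
    intro σ τ hσ hστ hτ x
    rcases eq_or_lt_of_le hτ with h1 | h1
    · subst h1
      rw [hVdef σ hσ hστ x, neg_neg, Real.exp_log (hVfin σ 1 hσ hστ le_rfl x).2]
    · have hσ1 : σ < 1 := lt_trans hστ h1
      have hτ0 : 0 ≤ τ := le_of_lt (lt_of_le_of_lt hσ hστ)
      have e1 : Real.exp (-(V σ x)) = ∫ z, gaussDensity d (1 - σ) z *
          Real.exp (-(V 1 (x + z))) := by
        rw [hVdef σ hσ hσ1 x, neg_neg, Real.exp_log (hVfin σ 1 hσ hσ1 le_rfl x).2]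
      have e2 : ∀ z, Real.exp (-(V τ (x + z))) = ∫ w, gaussDensity d (1 - τ) w *
          Real.exp (-(V 1 (x + (z + w)))) := by
        intro z
        rw [hVdef τ hτ0 h1 (x + z), neg_neg, Real.exp_log (hVfin τ 1 hτ0 h1 le_rfl (x + z)).2]
        congr 1; funext w; rw [add_assoc]
      have hint : Integrable (fun y => gaussDensity d (τ - σ + (1 - τ)) y *
          |Real.exp (-(V 1 (x + y)))|) := by
        have := hIe 1 (1 - σ) (by linarith) (by linarith) le_rfl x
        rw [show (1:ℝ) - σ = τ - σ + (1 - τ) by ring] at this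
        exact this
      have hck := ck (d := d) (sub_pos.2 hστ) (sub_pos.2 h1)
        (fun y => Real.exp (-(V 1 (x + y)))) (hme 1 zero_le_one le_rfl x) hint
      rw [show τ - σ + (1 - τ) = 1 - σ by ring] at hck
      rw [e1, ← hck]
      congr 1; funext z
      rw [e2 z]
  have hKone : ∀ t : ℝ, 0 < t → (2 * Real.pi * t) ^ ((d:ℝ)/2) * (2 * Real.pi * t) ^ (-(d:ℝ)/2) = 1 := by
    intro t ht
    rw [← Real.rpow_add (by positivity), show (d:ℝ)/2 + -(d:ℝ)/2 = 0 by ring, Real.rpow_zero]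
  have hKne : ∀ t : ℝ, 0 < t → ((2 * Real.pi * t) ^ ((d:ℝ)/2) : ℝ) ≠ 0 := by
    intro t ht
    exact (Real.rpow_pos_of_pos (by positivity) _).ne'
  have nu_eq : ∀ t : ℝ, 0 < t → ∀ x, nuDensity d V t x
      = (2 * Real.pi * t) ^ ((d:ℝ)/2) * (gaussDensity d t x * Real.exp (-(V t x))) := by
    intro t ht x
    unfold nuDensity gaussDensity
    rw [show -(V t x) - ‖x‖^2/(2*t) = (-(‖x‖^2/(2*t))) + (-(V t x)) by ring, Real.exp_add]
    rw [show ((2 * Real.pi * t) ^ ((d:ℝ)/2) : ℝ) *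
        ((2 * Real.pi * t) ^ (-(d:ℝ)/2) * Real.exp (-‖x‖^2/(2*t)) * Real.exp (-(V t x)))
      = ((2 * Real.pi * t) ^ ((d:ℝ)/2) * (2 * Real.pi * t) ^ (-(d:ℝ)/2)) *
        (Real.exp (-‖x‖^2/(2*t)) * Real.exp (-(V t x))) by ring, hKone t ht, one_mul, neg_div]
  have cancel' : ∀ (K G a J : ℝ), (K * (G * Real.exp (-a))) * (Real.exp a * J) = K * (G * J) := by
    intro K G a J
    rw [show (K * (G * Real.exp (-a))) * (Real.exp a * J)
        = (Real.exp (-a) * Real.exp a) * (K * (G * J)) by ring,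
      ← Real.exp_add, neg_add_cancel, Real.exp_zero, one_mul]
  have part1 : ∀ ρ σ τ, 0 ≤ ρ → ρ ≤ σ → σ ≤ τ → τ ≤ 1 → ∀ x,
      polchinskiP d V ρ σ (polchinskiP d V σ τ f) x = polchinskiP d V ρ τ f x := by
    intro ρ σ τ hρ hρσ hστ hτ1 x
    by_cases hστ' : σ = τ
    · subst hστ'; simp [polchinskiP]
    · by_cases hρσ' : ρ = σ
      · subst hρσ'; simp [polchinskiP]
      · have hρσl : ρ < σ := lt_of_le_of_ne hρσ hρσ'
        have hστl : σ < τ := lt_of_le_of_ne hστ hστ'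
        have hρτ : ρ ≠ τ := ne_of_lt (lt_trans hρσl hστl)
        simp only [polchinskiP, if_neg hρσ', if_neg hρτ, if_neg hστ']
        congr 1
        have inner_eq : ∀ z, gaussDensity d (σ - ρ) z *
            (Real.exp (-(V σ (x + z))) * (Real.exp (V σ (x + z)) *
              ∫ w, gaussDensity d (τ - σ) w *
                (Real.exp (-(V τ (x + z + w))) * f (x + z + w))))
            = gaussDensity d (σ - ρ) z * ∫ w, gaussDensity d (τ - σ) w *
              (Real.exp (-(V τ (x + (z + w)))) * f (x + (z + w))) := by
          intro z
          rw [cancel]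
          simp_rw [add_assoc]
        simp_rw [inner_eq]
        have hint : Integrable (fun y => gaussDensity d (σ - ρ + (τ - σ)) y *
            |Real.exp (-(V τ (x + y))) * f (x + y)|) := by
          have := hIf τ (τ - ρ) (by linarith) (by linarith) hτ1 x
          rw [show τ - ρ = σ - ρ + (τ - σ) by ring] at this
          exact this
        have hck := ck (d := d) (sub_pos.2 hρσl) (sub_pos.2 hστl)
          (fun y => Real.exp (-(V τ (x + y))) * f (x + y))
          (hmef τ (by linarith) hτ1 x) hint
        rw [show σ - ρ + (τ - σ) = τ - ρ by ring] at hck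
        exact hck
  refine ⟨part1, ?_, ?_⟩
  · -- part (ii)
    intro σ τ hσ0 hστ hτ1
    by_cases hστ' : σ = τ
    · subst hστ'; simp [polchinskiP, expD]
    · have hστl : σ < τ := lt_of_le_of_ne hστ hστ'
      have hτ0 : 0 < τ := lt_trans hσ0 hστl
      have numτ : ∫ x, nuDensity d V τ x * f x
          = (2 * Real.pi * τ) ^ ((d:ℝ)/2) *
            ∫ y, gaussDensity d τ y * (Real.exp (-(V τ y)) * f y) := by
        rw [← MeasureTheory.integral_const_mul]
        congr 1; funext x
        rw [nu_eq τ hτ0 x]; ring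
      have denτ : ∫ x, nuDensity d V τ x
          = (2 * Real.pi * τ) ^ ((d:ℝ)/2) * ∫ y, gaussDensity d τ y * Real.exp (-(V τ y)) := by
        rw [← MeasureTheory.integral_const_mul]
        congr 1; funext x
        rw [nu_eq τ hτ0 x]
      have numσ : ∫ x, nuDensity d V σ x * polchinskiP d V σ τ f x
          = (2 * Real.pi * σ) ^ ((d:ℝ)/2) *
            ∫ y, gaussDensity d τ y * (Real.exp (-(V τ y)) * f y) := by
        have step : ∀ x, nuDensity d V σ x * polchinskiP d V σ τ f x
            = (2 * Real.pi * σ) ^ ((d:ℝ)/2) * (gaussDensity d σ x *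
              ∫ w, gaussDensity d (τ - σ) w * (Real.exp (-(V τ (x + w))) * f (x + w))) := by
          intro x
          simp only [polchinskiP, if_neg hστ']
          rw [nu_eq σ hσ0 x, cancel']
        simp_rw [step]
        rw [MeasureTheory.integral_const_mul]
        congr 1
        have hint : Integrable (fun y => gaussDensity d (σ + (τ - σ)) y *
            |Real.exp (-(V τ y)) * f y|) := by
          have := hIf τ τ hτ0 le_rfl hτ1 0
          rw [show τ = σ + (τ - σ) by ring] at this
          simpa [zero_add] using this
        have hck := ck (d := d) hσ0 (sub_pos.2 hστl)
          (fun y => Real.exp (-(V τ y)) * f y)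
          ((Real.measurable_exp.comp ((hVmeas τ (by linarith) hτ1).neg)).mul hf_meas) hint
        rw [show σ + (τ - σ) = τ by ring] at hck
        exact hck
      have denσ : ∫ x, nuDensity d V σ x
          = (2 * Real.pi * σ) ^ ((d:ℝ)/2) * ∫ y, gaussDensity d τ y * Real.exp (-(V τ y)) := by
        have step : ∀ x, nuDensity d V σ x
            = (2 * Real.pi * σ) ^ ((d:ℝ)/2) * (gaussDensity d σ x *
              ∫ w, gaussDensity d (τ - σ) w * Real.exp (-(V τ (x + w)))) := by
          intro x
          rw [nu_eq σ hσ0 x, renorm σ τ (le_of_lt hσ0) hστl hτ1 x]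
        simp_rw [step]
        rw [MeasureTheory.integral_const_mul]
        congr 1
        have hint : Integrable (fun y => gaussDensity d (σ + (τ - σ)) y *
            |Real.exp (-(V τ y))|) := by
          have := hIe τ τ hτ0 le_rfl hτ1 0
          rw [show τ = σ + (τ - σ) by ring] at this
          simpa [zero_add] using this
        have hck := ck (d := d) hσ0 (sub_pos.2 hστl)
          (fun y => Real.exp (-(V τ y)))
          (Real.measurable_exp.comp ((hVmeas τ (by linarith) hτ1).neg)) hint
        rw [show σ + (τ - σ) = τ by ring] at hck
        exact hck
      rw [expD, expD, numτ, denτ, numσ, denσ,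
        mul_div_mul_left _ _ (hKne τ hτ0), mul_div_mul_left _ _ (hKne σ hσ0)]
  · -- part (iii)
    intro τ hτ0 hτ1
    have h0τ : (0:ℝ) ≠ τ := ne_of_lt hτ0
    have numτ : ∫ x, nuDensity d V τ x * f x
        = (2 * Real.pi * τ) ^ ((d:ℝ)/2) *
          ∫ y, gaussDensity d τ y * (Real.exp (-(V τ y)) * f y) := by
      rw [← MeasureTheory.integral_const_mul]
      congr 1; funext x
      rw [nu_eq τ hτ0 x]; ring
    have denτ : ∫ x, nuDensity d V τ x
        = (2 * Real.pi * τ) ^ ((d:ℝ)/2) * ∫ y, gaussDensity d τ y * Real.exp (-(V τ y)) := by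
      rw [← MeasureTheory.integral_const_mul]
      congr 1; funext x
      rw [nu_eq τ hτ0 x]
    have hR := renorm 0 τ le_rfl hτ0 hτ1 0
    simp only [sub_zero, zero_add] at hR
    rw [polchinskiP, if_neg h0τ]
    simp only [sub_zero, zero_add]
    rw [show Real.exp (V 0 0) = (Real.exp (-(V 0 0)))⁻¹ by rw [Real.exp_neg, inv_inv], hR,
      expD, numτ, denτ, mul_div_mul_left _ _ (hKne τ hτ0), inv_mul_eq_div]
end

section
/- The localization dynamics of stochastic localization equals the restricted Gaussian dynamics: let π be a strictly positive probability density on ℝ^d, let T > 0, and set η := 1/T. Define the joint density ρ(w,c) := π(w)·(2πT)^{−d/2} exp(−‖c − Tw‖₂²/(2T)), with c-marginal μ(c) := ∫ ρ(w,c) dw, posterior π(x|c) := ρ(x,c)/μ(c), and conditional μ(c|x) := ρ(x,c)/π(x). Then for all x, x' ∈ ℝ^d, ∫ [π(x|c) π(x'|c) / π(x)] μ(c) dc = ∫ μ(c|x) π(x'|c) dc, and this common value equals the transition density of the restricted Gaussian dynamics with step size η and target π evaluated at (x, x'), namely ∫ (2πη)^{−d/2} exp(−‖y−x‖₂²/(2η))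 · [exp(−‖x'−y‖₂²/(2η)) π(x') / Z(y)] dy with Z(y) := ∫ exp(−‖z−y‖₂²/(2η)) π(z) dz. -/
open MeasureTheory Real

/-!
Since `‖c - T w‖² / T = T ‖c / T - w‖²`, the Gaussian factor of the joint density is the restricted
Gaussian kernel `exp (-‖c / T - w‖² / (2η))`. Hence `μc c` is a constant multiple of `Z (c / T)`,
and `cond (c | x) · post (x' | c)` is the same constant times the restricted Gaussian integrand at
`y = c / T`; the substitution `c = T y` produces the Jacobian `T ^ d`, which turns
`(2πT) ^ (-d/2)` into `(2πη) ^ (-d/2)`. The first equality is pointwise Bayes' rule.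
-/

lemma neg_sq_norm_sub_smul_div_two_mul {E : Type*} [NormedAddCommGroup E] [NormedSpace ℝ E]
    {T : ℝ} (hT : T ≠ 0) (a c : E) :
    -‖c - T • a‖ ^ 2 / (2 * T) = -‖T⁻¹ • c - a‖ ^ 2 / (2 * T⁻¹) := by
  have hc : c - T • a = T • (T⁻¹ • c - a) := by
    rw [smul_sub, smul_smul, mul_inv_cancel₀ hT, one_smul]
  rw [hc, norm_smul, mul_pow, Real.norm_eq_abs, sq_abs]
  field_simp

lemma pow_mul_two_pi_mul_rpow_neg_half {T : ℝ} (hT : 0 < T) (d : ℕ) :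
    T ^ d * (2 * π * T) ^ (-(d : ℝ) / 2) = (2 * π * T⁻¹) ^ (-(d : ℝ) / 2) := by
  have hsplit : 2 * π * T = (2 * π * T⁻¹) * T ^ 2 := by field_simp
  rw [hsplit, mul_rpow (by positivity) (by positivity), ← rpow_natCast T 2,
    ← rpow_mul hT.le, ← rpow_natCast T d]
  rw [mul_left_comm, ← rpow_add hT, Nat.cast_ofNat, show (d : ℝ) + 2 * (-(d : ℝ) / 2) = 0 by ring,
    rpow_zero, mul_one]

lemma div_mul_div_div_mul_self {K : Type*} [Field K] (a b q m : K) :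
    a / m * (b / m) / q * m = a / q * (b / m) := by
  rcases eq_or_ne m 0 with rfl | hm
  · simp
  · field_simp

theorem localization_dynamics_eq_RGD_general (d : ℕ)
    (p : EuclideanSpace ℝ (Fin d) → ℝ)
    (hp_pos : ∀ x, 0 < p x)
    (T : ℝ) (hT : 0 < T) (η : ℝ) (hη : η = 1 / T)
    (ρ : EuclideanSpace ℝ (Fin d) → EuclideanSpace ℝ (Fin d) → ℝ)
    (hρ : ∀ w c, ρ w c = p w * (2 * Real.pi * T) ^ (-(d : ℝ) / 2) *
      Real.exp (-‖c - T • w‖ ^ 2 / (2 * T)))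
    (μc : EuclideanSpace ℝ (Fin d) → ℝ) (hμc : ∀ c, μc c = ∫ w, ρ w c)
    (post : EuclideanSpace ℝ (Fin d) → EuclideanSpace ℝ (Fin d) → ℝ)
    (hpost : ∀ x c, post x c = ρ x c / μc c)
    (cond : EuclideanSpace ℝ (Fin d) → EuclideanSpace ℝ (Fin d) → ℝ)
    (hcond : ∀ c x, cond c x = ρ x c / p x)
    (Z : EuclideanSpace ℝ (Fin d) → ℝ)
    (hZ : ∀ y, Z y = ∫ z, Real.exp (-‖z - y‖ ^ 2 / (2 * η)) * p z) :
    ∀ x x' : EuclideanSpace ℝ (Fin d),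
      (∫ c, post x c * post x' c / p x * μc c) = (∫ c, cond c x * post x' c) ∧
      (∫ c, cond c x * post x' c) =
        ∫ y, (2 * Real.pi * η) ^ (-(d : ℝ) / 2) *
          Real.exp (-‖y - x‖ ^ 2 / (2 * η)) *
          (Real.exp (-‖x' - y‖ ^ 2 / (2 * η)) * p x' / Z y) := by
  obtain rfl : η = T⁻¹ := hη.trans (one_div T)
  intro x x'
  set K := (2 * π * T) ^ (-(d : ℝ) / 2)
  have hK : K ≠ 0 := (rpow_pos_of_pos (by positivity) _).ne'
  have hρ' : ∀ w c, ρ w c = p w * K * exp (-‖T⁻¹ • c - w‖ ^ 2 / (2 * T⁻¹)) := fun w c => by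
    rw [hρ, neg_sq_norm_sub_smul_div_two_mul hT.ne']
  have hμc' : ∀ c, μc c = K * Z (T⁻¹ • c) := fun c => by
    rw [hμc, hZ, ← integral_const_mul]
    congr 1 with w
    rw [hρ', norm_sub_rev]
    ring
  refine ⟨integral_congr_ae (.of_forall fun c => ?_), ?_⟩
  · simp only [hpost, hcond]
    exact div_mul_div_div_mul_self _ _ _ _
  set g : EuclideanSpace ℝ (Fin d) → ℝ := fun y => exp (-‖y - x‖ ^ 2 / (2 * T⁻¹)) *
    (exp (-‖x' - y‖ ^ 2 / (2 * T⁻¹)) * p x' / Z y)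
  have hintegrand : ∀ c, cond c x * post x' c = K * g (T⁻¹ • c) := fun c => by
    rw [hcond, hpost, hρ', hρ', hμc', norm_sub_rev _ x']
    simp only [g]
    field_simp [(hp_pos x).ne']
  calc ∫ c, cond c x * post x' c = ∫ c, K * g (T⁻¹ • c) := integral_congr_ae (.of_forall hintegrand)
    _ = ∫ y, T ^ d * K * g y := by
      rw [integral_const_mul, Measure.integral_comp_inv_smul_of_nonneg _ _ hT.le,
        finrank_euclideanSpace_fin, smul_eq_mul, integral_const_mul]
      ring
    _ = _ := by
      simp only [K, pow_mul_two_pi_mul_rpow_neg_half hT]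
      simp only [g, mul_assoc]

/-- **The localization dynamics of stochastic localization equals the restricted Gaussian
dynamics.**  Let `p` be a strictly positive probability density on `ℝ^d`, `T > 0`,
`η = 1/T`.  With the joint density `ρ(w,c) = p(w)·(2πT)^{-d/2} exp(-‖c - Tw‖²/(2T))`,
`c`-marginal `μc`, posterior `post x c = ρ(x,c)/μc(c)`, and conditional
`cond c x = ρ(x,c)/p(x)`, we have for all `x, x'`:
`∫ post(x|c) post(x'|c) / p(x) · μc(c) dc = ∫ cond(c|x) post(x'|c) dc`, and this common
value equals the transition density of the restricted Gaussian dynamics with step size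
`η` and target `p` at `(x,x')`. -/
theorem localization_dynamics_eq_RGD (d : ℕ)
    (p : EuclideanSpace ℝ (Fin d) → ℝ)
    (hp_pos : ∀ x, 0 < p x) (hp_meas : Measurable p) (hp_prob : ∫ x, p x = 1)
    (T : ℝ) (hT : 0 < T) (η : ℝ) (hη : η = 1 / T)
    (ρ : EuclideanSpace ℝ (Fin d) → EuclideanSpace ℝ (Fin d) → ℝ)
    (hρ : ∀ w c, ρ w c = p w * (2 * Real.pi * T) ^ (-(d : ℝ) / 2) *
      Real.exp (-‖c - T • w‖ ^ 2 / (2 * T)))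
    (μc : EuclideanSpace ℝ (Fin d) → ℝ) (hμc : ∀ c, μc c = ∫ w, ρ w c)
    (hμc_pos : ∀ c, 0 < μc c)
    (post : EuclideanSpace ℝ (Fin d) → EuclideanSpace ℝ (Fin d) → ℝ)
    (hpost : ∀ x c, post x c = ρ x c / μc c)
    (cond : EuclideanSpace ℝ (Fin d) → EuclideanSpace ℝ (Fin d) → ℝ)
    (hcond : ∀ c x, cond c x = ρ x c / p x)
    (Z : EuclideanSpace ℝ (Fin d) → ℝ)
    (hZ : ∀ y, Z y = ∫ z, Real.exp (-‖z - y‖ ^ 2 / (2 * η)) * p z)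
    (hZ_pos : ∀ y, 0 < Z y)
    -- all the displayed integrals are assumed finite:
    (hint : ∀ x x' : EuclideanSpace ℝ (Fin d),
      Integrable (fun c => post x c * post x' c / p x * μc c) ∧
      Integrable (fun c => cond c x * post x' c) ∧
      Integrable (fun y => (2 * Real.pi * η) ^ (-(d : ℝ) / 2) *
        Real.exp (-‖y - x‖ ^ 2 / (2 * η)) *
        (Real.exp (-‖x' - y‖ ^ 2 / (2 * η)) * p x' / Z y))) :
    ∀ x x' : EuclideanSpace ℝ (Fin d),
      (∫ c, post x c * post x' c / p x * μc c) = (∫ c, cond c x * post x' c) ∧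
      (∫ c, cond c x * post x' c) =
        ∫ y, (2 * Real.pi * η) ^ (-(d : ℝ) / 2) *
          Real.exp (-‖y - x‖ ^ 2 / (2 * η)) *
          (Real.exp (-‖x' - y‖ ^ 2 / (2 * η)) * p x' / Z y) :=
  localization_dynamics_eq_RGD_general d p hp_pos T hT η hη ρ hρ μc hμc post hpost cond hcond Z hZ
end

section
/- Stationarity of localization dynamics: let π be a probability measure on ℝ^d, let (Ω, 𝔽, ℙ) be a probability space, and let {ν_ω}_{ω∈Ω} be a measurable family of probability measures on ℝ^d, each absolutely continuous with respect to π, such that E_{ω∼ℙ}[ν_ω(A)] = π(A) for every measurable set A. Define the Markov kernel P(A | x) := E_{ω∼ℙ}[(dν_ω/dπ)(x) · ν_ω(A)]. Then π is stationary for P: for every measurable A ⊆ ℝ^d, ∫ P(A | x) dπ(x) = π(A). -/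
open MeasureTheory ProbabilityTheory
open scoped ENNReal

namespace ProbabilityTheory.Kernel

variable {Ω α : Type*} [MeasurableSpace Ω] [MeasurableSpace α]
  {μ : Measure α} {ν : Kernel Ω α} [IsMarkovKernel ν] {g : Ω → α → ℝ≥0∞}

theorem lintegral_density_eq_one (hg_dens : ∀ ω, ν ω = μ.withDensity (g ω)) (ω : Ω) :
    ∫⁻ x, g ω x ∂μ = 1 := by
  rw [← setLIntegral_univ, ← withDensity_apply _ MeasurableSet.univ, ← hg_dens ω, measure_univ]

theorem lintegral_lintegral_density_mul_apply [SFinite μ] (Pr : Measure Ω) [SFinite Pr]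
    (hg_meas : Measurable (Function.uncurry g)) (hg_dens : ∀ ω, ν ω = μ.withDensity (g ω))
    {A : Set α} (hA : MeasurableSet A) :
    ∫⁻ x, ∫⁻ ω, g ω x * ν ω A ∂Pr ∂μ = ∫⁻ ω, ν ω A ∂Pr := by
  have h_meas : Measurable fun p : α × Ω => g p.2 p.1 * ν p.2 A :=
    (hg_meas.comp measurable_swap).mul ((ν.measurable_coe hA).comp measurable_snd)
  rw [lintegral_lintegral_swap h_meas.aemeasurable]
  refine lintegral_congr fun ω => ?_
  rw [lintegral_mul_const _ hg_meas.of_uncurry_left, lintegral_density_eq_one hg_dens, one_mul]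

end ProbabilityTheory.Kernel

/-- **Stationarity of localization dynamics.**  Let `μ` be a probability measure on
`ℝ^d`, `(Ω, 𝔽, Pr)` a probability space, and `ν` a Markov kernel from `Ω` to `ℝ^d`
(a measurable family of probability measures), each `ν ω` absolutely continuous with
respect to `μ` with jointly measurable Radon–Nikodym derivative `g ω`, and such that
`E_{ω ∼ Pr}[ν ω A] = μ A` for every measurable `A`.  Then `μ` is stationary for the
Markov kernel `P(A|x) := E_{ω∼Pr}[g ω x · ν ω A]`:
`∫ P(A|x) dμ(x) = μ A` for every measurable `A`. -/
theorem localization_dynamics_stationary (d : ℕ) {Ω : Type*} [MeasurableSpace Ω]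
    (Pr : Measure Ω) [IsProbabilityMeasure Pr]
    (μ : Measure (EuclideanSpace ℝ (Fin d))) [IsProbabilityMeasure μ]
    (ν : Kernel Ω (EuclideanSpace ℝ (Fin d))) [IsMarkovKernel ν]
    (g : Ω → EuclideanSpace ℝ (Fin d) → ℝ≥0∞)
    (hg_meas : Measurable (Function.uncurry g))
    (hg_dens : ∀ ω, ν ω = μ.withDensity (g ω))
    (hmart : ∀ A : Set (EuclideanSpace ℝ (Fin d)), MeasurableSet A →
      ∫⁻ ω, ν ω A ∂Pr = μ A)
    (P : Set (EuclideanSpace ℝ (Fin d)) → EuclideanSpace ℝ (Fin d) → ℝ≥0∞)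
    (hP : ∀ A x, P A x = ∫⁻ ω, g ω x * ν ω A ∂Pr) :
    ∀ A : Set (EuclideanSpace ℝ (Fin d)), MeasurableSet A →
      ∫⁻ x, P A x ∂μ = μ A := by
  intro A hA
  simp only [hP]
  rw [Kernel.lintegral_lintegral_density_mul_apply Pr hg_meas hg_dens hA, hmart A hA]
end
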